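/- The four-qubit GHZ state e₁⊗e₁⊗e₁⊗e₁ + e₂⊗e₂⊗e₂⊗e₂ and the four-qubit cluster state e₁⊗e₁⊗e₁⊗e₁ + e₁⊗e₁⊗e₂⊗e₂ + e₂⊗e₂⊗e₁⊗e₁ − e₂⊗e₂⊗e₂⊗e₂ are not SLOCC-equivalent: there exist no invertible linear maps F¹, F², F³, F⁴ on ℂ² with (F¹ ⊗ F² ⊗ F³ ⊗ F⁴)(e₁⊗e₁⊗e₁⊗e₁ + e₂⊗e₂⊗e₂⊗e₂) = e₁⊗e₁⊗e₁⊗e₁ + e₁⊗e₁⊗e₂⊗e₂ + e₂⊗e₂⊗e₁⊗e₁ − e₂⊗e₂⊗e₂⊗e₂. -/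

import Mathlib

open scoped TensorProduct

/-- The standard basis vectors of `ℂ²` (`e 0 = e₁`, `e 1 = e₂`). -/
noncomputable def e (i : Fin 2) : Fin 2 → ℂ := Pi.single i 1

/-- The space of the last three qubits. -/
abbrev Qubit3 := (Fin 2 → ℂ) ⊗[ℂ] ((Fin 2 → ℂ) ⊗[ℂ] (Fin 2 → ℂ))

/-- The space of four qubits, `ℂ² ⊗ ℂ² ⊗ ℂ² ⊗ ℂ²`. -/
abbrev Qubit4 := (Fin 2 → ℂ) ⊗[ℂ] Qubit3

-- Help instance synthesis on the deeply nested tensor product (this is the canonical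
-- Mathlib instance, just with explicit arguments).
noncomputable instance : AddCommGroup Qubit4 :=
  @TensorProduct.addCommGroup ℂ _ (Fin 2 → ℂ) Qubit3 _ _ _ _

/-- The action of four linear maps on the four-qubit space. -/
noncomputable def map4 (F1 F2 F3 F4 : (Fin 2 → ℂ) →ₗ[ℂ] (Fin 2 → ℂ)) :
    Qubit4 →ₗ[ℂ] Qubit4 :=
  TensorProduct.map F1 (TensorProduct.map F2 (TensorProduct.map F3 F4))

/-- The four-qubit GHZ state `e₁⊗e₁⊗e₁⊗e₁ + e₂⊗e₂⊗e₂⊗e₂`. -/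
noncomputable def GHZ4 : Qubit4 :=
  e 0 ⊗ₜ[ℂ] (e 0 ⊗ₜ[ℂ] (e 0 ⊗ₜ[ℂ] e 0)) + e 1 ⊗ₜ[ℂ] (e 1 ⊗ₜ[ℂ] (e 1 ⊗ₜ[ℂ] e 1))

/-- The four-qubit cluster state
`e₁⊗e₁⊗e₁⊗e₁ + e₁⊗e₁⊗e₂⊗e₂ + e₂⊗e₂⊗e₁⊗e₁ − e₂⊗e₂⊗e₂⊗e₂`. -/
noncomputable def cluster4 : Qubit4 :=
  e 0 ⊗ₜ[ℂ] (e 0 ⊗ₜ[ℂ] (e 0 ⊗ₜ[ℂ] e 0)) + e 0 ⊗ₜ[ℂ] (e 0 ⊗ₜ[ℂ] (e 1 ⊗ₜ[ℂ] e 1))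
    + e 1 ⊗ₜ[ℂ] (e 1 ⊗ₜ[ℂ] (e 0 ⊗ₜ[ℂ] e 0)) - e 1 ⊗ₜ[ℂ] (e 1 ⊗ₜ[ℂ] (e 1 ⊗ₜ[ℂ] e 1))

/-!
Regard a four-qubit state as a `4 × 4` matrix, indexing rows by the first and third qubits and
columns by the second and fourth. A sum of `n` product states gives a matrix of rank at most `n`,
and local maps send GHZ to a sum of two product states. The cluster state, however, becomes
`diag(1, 1, 1, -1)`, of rank `4`.
-/

noncomputable def qubit4Basis : Module.Basis (Fin 2 × Fin 2 × Fin 2 × Fin 2) ℂ Qubit4 :=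
  (Pi.basisFun ℂ (Fin 2)).tensorProduct
    ((Pi.basisFun ℂ (Fin 2)).tensorProduct ((Pi.basisFun ℂ (Fin 2)).tensorProduct
      (Pi.basisFun ℂ (Fin 2))))

@[simp]
lemma qubit4Basis_repr_tmul (a b c d : Fin 2 → ℂ) (i j k l : Fin 2) :
    qubit4Basis.repr (a ⊗ₜ (b ⊗ₜ (c ⊗ₜ d))) (i, j, k, l) = a i * (b j * (c k * d l)) := by
  simp only [qubit4Basis, Module.Basis.tensorProduct_repr_tmul_apply, Pi.basisFun_repr,
    smul_eq_mul]
  ring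

noncomputable def flattening13 (ψ : Qubit4) : Matrix (Fin 2 × Fin 2) (Fin 2 × Fin 2) ℂ :=
  Matrix.of fun p q => qubit4Basis.repr ψ (p.1, q.1, p.2, q.2)

lemma rank_flattening13_sum_tmul_le {ι : Type*} [Fintype ι] (a b c d : ι → Fin 2 → ℂ) :
    (flattening13 (∑ r, a r ⊗ₜ (b r ⊗ₜ (c r ⊗ₜ d r)))).rank ≤ Fintype.card ι := by
  have factor : flattening13 (∑ r, a r ⊗ₜ (b r ⊗ₜ (c r ⊗ₜ d r)))
      = Matrix.of (fun p r => a r p.1 * c r p.2) * Matrix.of (fun r q => b r q.1 * d r q.2) := by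
    ext p q
    simp only [flattening13, map_sum, Finsupp.coe_finsetSum, Finset.sum_apply,
      qubit4Basis_repr_tmul, Matrix.of_apply, Matrix.mul_apply]
    exact Finset.sum_congr rfl fun r _ => by ring
  rw [factor]
  exact (Matrix.rank_mul_le_left _ _).trans (Matrix.rank_le_card_width _)

lemma map4_GHZ4 (F1 F2 F3 F4 : (Fin 2 → ℂ) →ₗ[ℂ] (Fin 2 → ℂ)) :
    map4 F1 F2 F3 F4 GHZ4 = ∑ r, F1 (e r) ⊗ₜ (F2 (e r) ⊗ₜ (F3 (e r) ⊗ₜ F4 (e r))) := by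
  simp [map4, GHZ4, Fin.sum_univ_two]

lemma flattening13_cluster4 :
    flattening13 cluster4 = Matrix.diagonal fun p => if p = (1, 1) then -1 else 1 := by
  ext ⟨i, k⟩ ⟨j, l⟩
  simp only [flattening13, cluster4, map_add, map_sub, Finsupp.coe_add, Finsupp.coe_sub,
    Pi.add_apply, Pi.sub_apply, qubit4Basis_repr_tmul, e, Pi.single_apply, Matrix.of_apply,
    Matrix.diagonal_apply, Prod.mk.injEq]
  fin_cases i <;> fin_cases j <;> fin_cases k <;> fin_cases l <;> norm_num

lemma rank_flattening13_cluster4 : (flattening13 cluster4).rank = 4 := by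
  rw [flattening13_cluster4, Matrix.rank_of_isUnit _ (Matrix.isUnit_diagonal.mpr _)]
  · rfl
  · exact Pi.isUnit_iff.mpr fun p => by split_ifs <;> simp

theorem GHZ4_not_slocc_equivalent_to_cluster4 :
    ¬ ∃ F1 F2 F3 F4 : (Fin 2 → ℂ) ≃ₗ[ℂ] (Fin 2 → ℂ),
        map4 F1.toLinearMap F2.toLinearMap F3.toLinearMap F4.toLinearMap GHZ4
          = cluster4 := by
  rintro ⟨F1, F2, F3, F4, h⟩
  have rank_le := rank_flattening13_sum_tmul_le (fun r => F1.toLinearMap (e r))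
    (fun r => F2.toLinearMap (e r)) (fun r => F3.toLinearMap (e r)) (fun r => F4.toLinearMap (e r))
  rw [← map4_GHZ4, h, rank_flattening13_cluster4] at rank_le
  simp at rank_le
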